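/- Let (α, T, N, B, κ, τ) be a timelike Frenet curve in E₁³ with κ and τ twice differentiable, and define the Darboux curve W(s) = −τ(s)·T(s) − κ(s)·B(s). If W'' is everywhere proportional to the normal, i.e. there is a function μ : ℝ → ℝ with W''(s) = μ(s)·N(s) for all s, then κ'' ≡ 0 and τ'' ≡ 0, so there exist constants a, b, c, d ∈ ℝ with κ(s) = a·s + b and τ(s) = c·s + d for all s; that is, α is an Euler spiral in E₁³. -/

import Mathlib

/-!
Along the Frenet frame, `W = -τ T - κ B` has `W' = -τ' T - κ' B`, since the `N`-components
`-τ κ` and `κ τ` coming from `T' = κ N` and `B' = -τ N` cancel. Differentiating once more gives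
`W'' = -τ'' T + (κ' τ - τ' κ) N - κ'' B`, so `W'' ∥ N` forces `τ'' = κ'' = 0`: pair with `T` and
with `B` using the orthonormality relations of the frame.
-/

/-- The Minkowski bilinear form on ℝ³: `⟨x,y⟩ = −x₀y₀ + x₁y₁ + x₂y₂`. -/
def mink (x y : Fin 3 → ℝ) : ℝ := -(x 0 * y 0) + x 1 * y 1 + x 2 * y 2

lemma mink_comm (x y : Fin 3 → ℝ) : mink x y = mink y x := by
  simp only [mink]; ring

lemma mink_add_left (x y z : Fin 3 → ℝ) : mink (x + y) z = mink x z + mink y z := by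
  simp only [mink, Pi.add_apply]; ring

lemma mink_sub_left (x y z : Fin 3 → ℝ) : mink (x - y) z = mink x z - mink y z := by
  simp only [mink, Pi.sub_apply]; ring

lemma mink_smul_left (a : ℝ) (x z : Fin 3 → ℝ) : mink (a • x) z = a * mink x z := by
  simp only [mink, Pi.smul_apply, smul_eq_mul]; ring

lemma tangent_binormal_coeffs_eq_zero_of_eq_smul_normal {T N B : Fin 3 → ℝ} {a b c m : ℝ}
    (hTT : mink T T = -1) (hBB : mink B B = 1)
    (hTN : mink T N = 0) (hTB : mink T B = 0) (hNB : mink N B = 0)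
    (h : -a • T - c • B + b • N = m • N) : a = 0 ∧ c = 0 := by
  have hT := congrArg (mink · T) h
  have hB := congrArg (mink · B) h
  simp only [mink_add_left, mink_sub_left, mink_smul_left] at hT hB
  rw [hTT, mink_comm B T, mink_comm N T, hTB, hTN] at hT
  rw [hBB, hTB, hNB] at hB
  constructor <;> linarith

lemma hasDerivAt_neg_smul_sub_smul_of_frenet {E : Type*} [NormedAddCommGroup E] [NormedSpace ℝ E]
    {T N B : ℝ → E} {κ τ f g f' g' : ℝ → ℝ} {s : ℝ}
    (hT : HasDerivAt T (κ s • N s) s) (hB : HasDerivAt B (-τ s • N s) s)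
    (hf : HasDerivAt f (f' s) s) (hg : HasDerivAt g (g' s) s) :
    HasDerivAt (fun s => -f s • T s - g s • B s)
      (-f' s • T s - g' s • B s + (g s * τ s - f s * κ s) • N s) s := by
  refine ((hf.neg.smul hT).sub (hg.smul hB)).congr_deriv ?_
  simp only [Pi.neg_apply, smul_smul, neg_mul, neg_smul, smul_neg, sub_smul]
  abel

lemma eq_mul_add_of_hasDerivAt_of_hasDerivAt_zero {f f' : ℝ → ℝ}
    (hf : ∀ s, HasDerivAt f (f' s) s) (hf' : ∀ s, HasDerivAt f' 0 s) (s : ℝ) :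
    f s = f' 0 * s + f 0 := by
  have hconst : ∀ x, f' x = f' 0 := fun x =>
    is_const_of_deriv_eq_zero (fun y => (hf' y).differentiableAt) (fun y => (hf' y).deriv) x 0
  have hlin : ∀ x, HasDerivAt (fun t => f t - f' 0 * t) 0 x := fun x => by
    refine ((hf x).sub ((hasDerivAt_id x).const_mul (f' 0))).congr_deriv ?_
    rw [hconst x]; ring
  have := is_const_of_deriv_eq_zero (fun y => (hlin y).differentiableAt)
    (fun y => (hlin y).deriv) s 0
  simp only [mul_zero, sub_zero] at this
  linarith

theorem darboux_geodesic_implies_euler_spiral_timelike_general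
    (T N B : ℝ → Fin 3 → ℝ) (κ τ κ' τ' κ'' τ'' : ℝ → ℝ)
    (hT : ∀ s, HasDerivAt T (κ s • N s) s)
    (hB : ∀ s, HasDerivAt B (-τ s • N s) s)
    (hTT : ∀ s, mink (T s) (T s) = -1)
    (hBB : ∀ s, mink (B s) (B s) = 1)
    (hTN : ∀ s, mink (T s) (N s) = 0)
    (hTB : ∀ s, mink (T s) (B s) = 0)
    (hNB : ∀ s, mink (N s) (B s) = 0)
    (hκ' : ∀ s, HasDerivAt κ (κ' s) s) (hτ' : ∀ s, HasDerivAt τ (τ' s) s)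
    (hκ'' : ∀ s, HasDerivAt κ' (κ'' s) s) (hτ'' : ∀ s, HasDerivAt τ' (τ'' s) s)
    (W : ℝ → Fin 3 → ℝ) (hW : ∀ s : ℝ, W s = -τ s • T s - κ s • B s)
    (μ : ℝ → ℝ) (hμ : ∀ s : ℝ, deriv (deriv W) s = μ s • N s) :
    (∀ s : ℝ, κ'' s = 0) ∧ (∀ s : ℝ, τ'' s = 0) ∧
      ∃ a b c d : ℝ, ∀ s : ℝ, κ s = a * s + b ∧ τ s = c * s + d := by
  have hW' : deriv W = fun s => -τ' s • T s - κ' s • B s := funext fun s => by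
    have h := hasDerivAt_neg_smul_sub_smul_of_frenet (hT s) (hB s) (hτ' s) (hκ' s)
    rw [mul_comm, sub_self, zero_smul, add_zero, ← funext hW] at h
    exact h.deriv
  have hcoeffs s : τ'' s = 0 ∧ κ'' s = 0 := by
    have h := (hasDerivAt_neg_smul_sub_smul_of_frenet (hT s) (hB s) (hτ'' s) (hκ'' s)).deriv
    rw [← hW', hμ s] at h
    exact tangent_binormal_coeffs_eq_zero_of_eq_smul_normal (hTT s) (hBB s) (hTN s) (hTB s)
      (hNB s) h.symm
  have hκ0 s : κ'' s = 0 := (hcoeffs s).2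
  have hτ0 s : τ'' s = 0 := (hcoeffs s).1
  refine ⟨hκ0, hτ0, κ' 0, κ 0, τ' 0, τ 0, fun s => ⟨?_, ?_⟩⟩
  · exact eq_mul_add_of_hasDerivAt_of_hasDerivAt_zero hκ' (fun x => hκ0 x ▸ hκ'' x) s
  · exact eq_mul_add_of_hasDerivAt_of_hasDerivAt_zero hτ' (fun x => hτ0 x ▸ hτ'' x) s

/-- For a timelike Frenet curve `(α, T, N, B, κ, τ)` in `E₁³` with `κ, τ` twice
differentiable, if the second derivative of the Darboux curve
`W(s) = −τ(s)·T(s) − κ(s)·B(s)` is everywhere proportional to the normal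
(`W'' = μ·N`), then `κ'' ≡ 0` and `τ'' ≡ 0`, so `κ` and `τ` are affine functions
of arc length: `α` is an Euler spiral in `E₁³`. -/
theorem darboux_geodesic_implies_euler_spiral_timelike
    (α T N B : ℝ → Fin 3 → ℝ) (κ τ κ' τ' κ'' τ'' : ℝ → ℝ)
    (hα : ∀ s, HasDerivAt α (T s) s)
    (hT : ∀ s, HasDerivAt T (κ s • N s) s)
    (hN : ∀ s, HasDerivAt N (κ s • T s + τ s • B s) s)
    (hB : ∀ s, HasDerivAt B (-τ s • N s) s)
    (hTT : ∀ s, mink (T s) (T s) = -1)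
    (hNN : ∀ s, mink (N s) (N s) = 1)
    (hBB : ∀ s, mink (B s) (B s) = 1)
    (hTN : ∀ s, mink (T s) (N s) = 0)
    (hTB : ∀ s, mink (T s) (B s) = 0)
    (hNB : ∀ s, mink (N s) (B s) = 0)
    (hκ' : ∀ s, HasDerivAt κ (κ' s) s) (hτ' : ∀ s, HasDerivAt τ (τ' s) s)
    (hκ'' : ∀ s, HasDerivAt κ' (κ'' s) s) (hτ'' : ∀ s, HasDerivAt τ' (τ'' s) s)
    (W : ℝ → Fin 3 → ℝ) (hW : ∀ s : ℝ, W s = -τ s • T s - κ s • B s)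
    (μ : ℝ → ℝ) (hμ : ∀ s : ℝ, deriv (deriv W) s = μ s • N s) :
    (∀ s : ℝ, κ'' s = 0) ∧ (∀ s : ℝ, τ'' s = 0) ∧
      ∃ a b c d : ℝ, ∀ s : ℝ, κ s = a * s + b ∧ τ s = c * s + d :=
  darboux_geodesic_implies_euler_spiral_timelike_general T N B κ τ κ' τ' κ'' τ'' hT hB hTT hBB hTN
    hTB hNB hκ' hτ' hκ'' hτ'' W hW μ hμ
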